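/- arXiv:1405.3347 — 2 statements merged into one kernel-verified Lean document; each statement's English description precedes it below -/
import Mathlib

section
/- Let C be a linear code of length n over R = ℤ₉[u]/(u²-u) with decomposition C = u·C₁ ⊕ (1-u)·C₂. Then C^⊥ = u·C₁^⊥ ⊕ (1-u)·C₂^⊥. -/
open Polynomial

noncomputable section

/-- The ring `R = ℤ₉[u]/(u² - u)`. -/
abbrev R9 : Type := Polynomial (ZMod 9) ⧸ Ideal.span {(X : Polynomial (ZMod 9)) ^ 2 - X}

/-- The element `u` of `R`, the image of `X`. -/
def uu : R9 := Ideal.Quotient.mk _ (X : Polynomial (ZMod 9))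

/-- The canonical embedding `ℤ₉ → R`. -/
def ι : ZMod 9 →+* R9 :=
  (Ideal.Quotient.mk _).comp (Polynomial.C : ZMod 9 →+* Polynomial (ZMod 9))
/-- The word `u·x + (1-u)·y ∈ Rⁿ` built from `x, y ∈ ℤ₉ⁿ`. -/
def combine (n : ℕ) (x y : Fin n → ZMod 9) : Fin n → R9 :=
  fun i => uu * ι (x i) + (1 - uu) * ι (y i)

/-- `C₁ = {x ∈ ℤ₉ⁿ : ∃ y, ux + (1-u)y ∈ C}`. -/
def comp1 (n : ℕ) (S : Set (Fin n → R9)) : Set (Fin n → ZMod 9) :=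
  {x | ∃ y, combine n x y ∈ S}

/-- `C₂ = {y ∈ ℤ₉ⁿ : ∃ x, ux + (1-u)y ∈ C}`. -/
def comp2 (n : ℕ) (S : Set (Fin n → R9)) : Set (Fin n → ZMod 9) :=
  {y | ∃ x, combine n x y ∈ S}

/-- The Euclidean dual of a set of words over `R`. -/
def dualR (n : ℕ) (S : Set (Fin n → R9)) : Set (Fin n → R9) :=
  {x | ∀ c ∈ S, ∑ i, x i * c i = 0}

/-- The Euclidean dual of a set of words over `ℤ₉`. -/
def dualZ (n : ℕ) (S : Set (Fin n → ZMod 9)) : Set (Fin n → ZMod 9) :=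
  {x | ∀ c ∈ S, ∑ i, x i * c i = 0}

/-! Since `u` is idempotent, `r ↦ (r(1), r(0))` is a ring isomorphism `R ≅ ℤ₉ × ℤ₉` with inverse
`(a, b) ↦ u a + (1 - u) b`. Every word of `Rⁿ` is therefore `u x + (1 - u) y` for unique `x, y`, and
the inner product of `u x + (1 - u) y` with `u a + (1 - u) b` corresponds to the pair `(x · a, y · b)`,
so it vanishes iff both `ℤ₉` inner products do. -/

lemma uu_mul_self : uu * uu = uu := by
  rw [uu, ← map_mul, ← sq, Ideal.Quotient.mk_eq_mk_iff_sub_mem]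
  exact Ideal.subset_span rfl

def evalAt (a : ZMod 9) (ha : a ^ 2 = a) : R9 →+* ZMod 9 :=
  Ideal.Quotient.lift _ (evalRingHom a) fun p hp => by
    obtain ⟨q, rfl⟩ := Ideal.mem_span_singleton'.1 hp
    simp [ha]

@[simp] lemma evalAt_uu (a : ZMod 9) (ha : a ^ 2 = a) : evalAt a ha uu = a :=
  (Ideal.Quotient.lift_mk _ _ _).trans (eval_X ..)

@[simp] lemma evalAt_ι (a : ZMod 9) (ha : a ^ 2 = a) (b : ZMod 9) : evalAt a ha (ι b) = b :=
  (Ideal.Quotient.lift_mk _ _ _).trans (eval_C ..)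

def toPair : R9 →+* ZMod 9 × ZMod 9 :=
  (evalAt 1 (one_pow 2)).prod (evalAt 0 (zero_pow two_ne_zero))

def ofPair : ZMod 9 × ZMod 9 →+* R9 where
  toFun p := uu * ι p.1 + (1 - uu) * ι p.2
  map_one' := by simp
  map_mul' p q := by
    simp only [Prod.fst_mul, Prod.snd_mul, map_mul]
    linear_combination (ι p.1 - ι p.2) * (ι q.2 - ι q.1) * uu_mul_self
  map_zero' := by simp
  map_add' p q := by simp only [Prod.fst_add, Prod.snd_add, map_add]; ring

lemma toPair_ofPair (p : ZMod 9 × ZMod 9) : toPair (ofPair p) = p := by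
  ext <;> simp [toPair, ofPair]

lemma ofPair_toPair (r : R9) : ofPair (toPair r) = r := by
  suffices h : ofPair.comp (toPair.comp (Ideal.Quotient.mk _)) = Ideal.Quotient.mk _ by
    obtain ⟨p, rfl⟩ := Ideal.Quotient.mk_surjective r
    exact RingHom.congr_fun h p
  refine Polynomial.ringHom_ext (fun a => ?_) ?_
  · change ofPair (toPair (ι a)) = ι a
    simp only [ofPair, toPair, RingHom.prod_apply, evalAt_ι, RingHom.coe_mk, MonoidHom.coe_mk,
      OneHom.coe_mk]
    ring
  · change ofPair (toPair uu) = uu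
    simp [toPair, ofPair]

lemma combine_apply (n : ℕ) (x y : Fin n → ZMod 9) (i : Fin n) :
    combine n x y i = ofPair (x i, y i) :=
  rfl

lemma combine_toPair (n : ℕ) (c : Fin n → R9) :
    combine n (fun i => (toPair (c i)).1) (fun i => (toPair (c i)).2) = c :=
  funext fun i => ofPair_toPair (c i)

lemma sum_combine_mul_eq_zero_iff (n : ℕ) (x y a b : Fin n → ZMod 9) :
    ∑ i, combine n x y i * combine n a b i = 0 ↔
      ∑ i, x i * a i = 0 ∧ ∑ i, y i * b i = 0 := by
  have h : ∑ i, combine n x y i * combine n a b i = ofPair (∑ i, x i * a i, ∑ i, y i * b i) := by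
    simp only [combine_apply, ← map_mul, ← map_sum, Prod.mk_mul_mk]
    exact congrArg ofPair (Prod.ext Prod.fst_sum Prod.snd_sum)
  rw [h, ← map_zero ofPair, (Function.LeftInverse.injective toPair_ofPair).eq_iff, Prod.mk_eq_zero]

theorem stmt10 (n : ℕ) (C : Submodule R9 (Fin n → R9)) :
    dualR n (C : Set (Fin n → R9)) =
      {c | ∃ x ∈ dualZ n (comp1 n (C : Set (Fin n → R9))),
           ∃ y ∈ dualZ n (comp2 n (C : Set (Fin n → R9))), c = combine n x y} := by
  ext c
  constructor
  · intro hc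
    rw [← combine_toPair n c] at hc
    refine ⟨_, fun a ⟨b, hab⟩ => ?_, _, fun b ⟨a, hab⟩ => ?_, (combine_toPair n c).symm⟩
    · exact ((sum_combine_mul_eq_zero_iff ..).1 (hc _ hab)).1
    · exact ((sum_combine_mul_eq_zero_iff ..).1 (hc _ hab)).2
  · rintro ⟨x, hx, y, hy, rfl⟩ d hd
    rw [← combine_toPair n d] at hd ⊢
    exact (sum_combine_mul_eq_zero_iff ..).2 ⟨hx _ ⟨_, hd⟩, hy _ ⟨_, hd⟩⟩
end
end

section
/- Let p be a prime with p ≡ -1 (mod 12). Define the quadratic residue codes D₁, D₂, E₁, E₂ of length p over R = ℤ₉[u]/(u²-u) as the ideals generated by the corresponding idempotents (depending on r mod 3 where p = 12r-1). Then |D₁| = |D₂| = 9^{p+1} and |E₁| = |E₂| = 9^{p-1}. -/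
/-
The sums `Q` and `N` are the two quadratic Gauss periods `η₊, η₋` of the additive character
`a ↦ Xᵃ` of `𝔽_p`. Their products are governed by the cyclotomic numbers of order two, which for
`p = 4m + 3` are `m, m, m, m + 1`; this gives the multiplication table of `Q` and `N`. Reducing
it mod 9 in each case of `r mod 3` shows that `E₁` and `c J` are orthogonal idempotents, where
`J = 1 + Q + N` is the all-ones word and `c = p⁻¹ mod 9`, that `D₁ = E₁ + c J`, and that
`E₂ = 1 - D₁`. Hence `|D₁| = 81 |E₁|` (the repetition code has `|R| = 81` words) and
`|D₁| |E₂| = |R|ᵖ = 81ᵖ`. Since `-1` is a non-residue, the ring automorphism `X ↦ X⁻¹` swaps `Q`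
and `N`, hence `E₁` with `E₂` and `D₁` with `D₂`. So `81 |E₁|² = 81ᵖ`.
-/

open Polynomial

noncomputable section

instance : CommRing R9 := Ideal.Quotient.commRing _

/-- The quotient ring `R[X]/(Xⁿ - 1)`. -/
abbrev Rn (n : ℕ) : Type := Polynomial R9 ⧸ Ideal.span {(X : Polynomial R9) ^ n - 1}

/-- The constants embedding `R → R[X]/(Xⁿ-1)`. -/
def ofR (n : ℕ) : R9 →+* Rn n :=
  (Ideal.Quotient.mk _).comp (Polynomial.C : R9 →+* Polynomial R9)

/-- The image of `X` in `R[X]/(Xⁿ-1)`. -/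
def xbar (n : ℕ) : Rn n := Ideal.Quotient.mk _ (X : Polynomial R9)

/-- A word `c ∈ Rⁿ` viewed as the element `Σ cᵢ Xⁱ` of `R[X]/(Xⁿ-1)`. -/
def toPoly (n : ℕ) (c : Fin n → R9) : Rn n :=
  ∑ i, ofR n (c i) * xbar n ^ (i : ℕ)

/-- The ring endomorphism of `R[X]/(Xⁿ-1)` induced by `X ↦ X^{n-1} = X⁻¹`. -/
def invX (n : ℕ) : Rn n →+* Rn n :=
  Ideal.Quotient.lift _ (Polynomial.eval₂RingHom (ofR n) (xbar n ^ (n - 1)))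
    (by
      intro a ha
      have hx : xbar n ^ n = 1 := by
        rw [xbar, ← map_pow, ← map_one (Ideal.Quotient.mk _),
          Ideal.Quotient.mk_eq_mk_iff_sub_mem]
        exact Ideal.subset_span rfl
      have h : Ideal.span {(X : Polynomial R9) ^ n - 1} ≤
          RingHom.ker (Polynomial.eval₂RingHom (ofR n) (xbar n ^ (n - 1))) := by
        rw [Ideal.span_le, Set.singleton_subset_iff]
        simp only [SetLike.mem_coe, RingHom.mem_ker, map_sub, map_pow, map_one,
          Polynomial.coe_eval₂RingHom, Polynomial.eval₂_X]
        rw [← pow_mul, Nat.mul_comm, pow_mul, hx]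
        exact sub_eq_zero.mpr (one_pow (M := Rn n) _)
      exact h ha)

/-- The Euclidean dual of the cyclic code given by an ideal of `R[X]/(Xⁿ-1)`. -/
def dualCode (n : ℕ) (J : Ideal (Rn n)) : Set (Fin n → R9) :=
  {x | ∀ c : Fin n → R9, toPoly n c ∈ J → ∑ i, x i * c i = 0}

/-- The cyclic shift. -/
def shift {α : Type*} {n : ℕ} [NeZero n] (c : Fin n → α) : Fin n → α :=
  fun i => c (i - 1)

open scoped Classical

/-- `Q(X) = Σ_{i ∈ Q_p} Xⁱ`, the sum over nonzero quadratic residues mod `p`,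
as an element of `R[X]/(X^p - 1)`. -/
def Qpoly (p : ℕ) [Fact p.Prime] : Rn p :=
  ∑ i : ZMod p, if i ≠ 0 ∧ IsSquare i then xbar p ^ i.val else 0

/-- `N(X) = Σ_{i ∈ N_p} Xⁱ`, the sum over quadratic non-residues mod `p`. -/
def Npoly (p : ℕ) [Fact p.Prime] : Rn p :=
  ∑ i : ZMod p, if i ≠ 0 ∧ ¬ IsSquare i then xbar p ^ i.val else 0

/-- The image of `u` as a constant in `R[X]/(X^p-1)`. -/
def uP (p : ℕ) : Rn p := ofR p uu

/-- Generating idempotent of the quadratic residue code `D₁` (case split on `r mod 3`,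
where `p = 12r - 1`). -/
def D1gen (p : ℕ) [Fact p.Prime] : Rn p :=
  let r := (p + 1) / 12
  if r % 3 = 0 then uP p * (8 * Qpoly p) + (1 - uP p) * (8 * Npoly p)
  else if r % 3 = 1 then
    uP p * (3 + 6 * Qpoly p + 8 * Npoly p) + (1 - uP p) * (3 + 6 * Npoly p + 8 * Qpoly p)
  else uP p * (6 + 3 * Qpoly p + 8 * Npoly p) + (1 - uP p) * (6 + 3 * Npoly p + 8 * Qpoly p)

/-- Generating idempotent of the quadratic residue code `D₂`. -/
def D2gen (p : ℕ) [Fact p.Prime] : Rn p :=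
  let r := (p + 1) / 12
  if r % 3 = 0 then uP p * (8 * Npoly p) + (1 - uP p) * (8 * Qpoly p)
  else if r % 3 = 1 then
    uP p * (3 + 6 * Npoly p + 8 * Qpoly p) + (1 - uP p) * (3 + 6 * Qpoly p + 8 * Npoly p)
  else uP p * (6 + 3 * Npoly p + 8 * Qpoly p) + (1 - uP p) * (6 + 3 * Qpoly p + 8 * Npoly p)

/-- Generating idempotent of the quadratic residue code `E₁`. -/
def E1gen (p : ℕ) [Fact p.Prime] : Rn p :=
  let r := (p + 1) / 12
  if r % 3 = 0 then uP p * (1 + Npoly p) + (1 - uP p) * (1 + Qpoly p)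
  else if r % 3 = 1 then
    uP p * (7 + Qpoly p + 3 * Npoly p) + (1 - uP p) * (7 + Npoly p + 3 * Qpoly p)
  else uP p * (4 + Qpoly p + 6 * Npoly p) + (1 - uP p) * (4 + Npoly p + 6 * Qpoly p)

/-- Generating idempotent of the quadratic residue code `E₂`. -/
def E2gen (p : ℕ) [Fact p.Prime] : Rn p :=
  let r := (p + 1) / 12
  if r % 3 = 0 then uP p * (1 + Qpoly p) + (1 - uP p) * (1 + Npoly p)
  else if r % 3 = 1 then
    uP p * (7 + Npoly p + 3 * Qpoly p) + (1 - uP p) * (7 + Qpoly p + 3 * Npoly p)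
  else uP p * (4 + Npoly p + 6 * Qpoly p) + (1 - uP p) * (4 + Qpoly p + 6 * Npoly p)

open Finset

section GaussPeriod

variable {F : Type*} [Field F] [Fintype F] [DecidableEq F]

local notation "χ" => quadraticChar F

lemma quadraticChar_ne_zero_iff {a : F} : χ a ≠ 0 ↔ a ≠ 0 :=
  (quadraticChar_eq_zero_iff (F := F)).not

lemma quadraticChar_eq_one_iff {a : F} : χ a = 1 ↔ a ≠ 0 ∧ IsSquare a := by
  refine ⟨fun h => ?_, fun h => (quadraticChar_one_iff_isSquare h.1).mpr h.2⟩
  have ha : a ≠ 0 := quadraticChar_ne_zero_iff.mp (by rw [h]; decide)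
  exact ⟨ha, (quadraticChar_one_iff_isSquare ha).mp h⟩

lemma quadraticChar_inv_apply (a : F) : χ a⁻¹ = χ a := by
  rcases eq_or_ne a 0 with rfl | ha
  · simp
  · have h : χ a⁻¹ * χ a = 1 := by rw [← map_mul, inv_mul_cancel₀ ha, map_one]
    rcases quadraticChar_dichotomy ha with h' | h' <;> rw [h'] at h ⊢ <;> linarith

lemma quadraticChar_mul_eq_iff {k : F} (hk : k ≠ 0) (a : F) (s : ℤ) :
    χ (k * a) = s ↔ χ a = χ k * s := by
  have hkk : χ k * χ k = 1 := by rw [← sq]; exact quadraticChar_sq_one hk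
  rw [map_mul]
  constructor <;> intro h
  · linear_combination χ k * h - χ a * hkk
  · linear_combination χ k * h + s * hkk

lemma sum_eq_add_sum_quadraticChar {M : Type*} [AddCommMonoid M] (f : F → M) :
    ∑ a, f a = f 0 + ∑ a with χ a = 1, f a + ∑ a with χ a = -1, f a := by
  have hunits : univ.erase 0 = ({a | χ a = 1} : Finset F) ∪ ({a | χ a = -1} : Finset F) := by
    ext a
    simp only [mem_erase, mem_univ, and_true, mem_union, mem_filter_univ]
    refine ⟨quadraticChar_dichotomy, ?_⟩
    rintro (h | h) <;> exact quadraticChar_ne_zero_iff.mp (by rw [h]; decide)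
  have hdisj : Disjoint ({a | χ a = 1} : Finset F) ({a | χ a = -1} : Finset F) :=
    disjoint_filter.mpr fun a _ h1 h2 => by rw [h1] at h2; exact absurd h2 (by decide)
  rw [← add_sum_erase _ _ (mem_univ 0), hunits, sum_union hdisj, add_assoc]

lemma card_filter_quadraticChar {ι : Type*} (S : Finset ι) (f : ι → F) :
    #{i ∈ S | f i = 0} + #{i ∈ S | χ (f i) = 1} + #{i ∈ S | χ (f i) = -1} = #S := by
  rw [card_filter, card_filter, card_filter, card_eq_sum_ones, ← sum_add_distrib,
    ← sum_add_distrib]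
  refine sum_congr rfl fun i _ => ?_
  rcases eq_or_ne (f i) 0 with h | h
  · simp [h]
  · rcases quadraticChar_dichotomy h with h' | h' <;> simp [h, h']

def cyclotomicNumber (s t : ℤ) (k : F) : ℕ := #{a | χ a = s ∧ χ (k - a) = t}

lemma cyclotomicNumber_of_ne_zero (s t : ℤ) {k : F} (hk : k ≠ 0) :
    cyclotomicNumber s t k = cyclotomicNumber (χ k * s) (χ k * t) (1 : F) :=
  (card_equiv (Equiv.mulLeft₀ k hk) fun b => by
    simp only [mem_filter_univ, Equiv.mulLeft₀_apply, ← mul_one_sub,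
      quadraticChar_mul_eq_iff hk]).symm

lemma cyclotomicNumber_add_cyclotomicNumber_one (s : ℤ) :
    cyclotomicNumber s 1 (1 : F) + cyclotomicNumber s (-1) (1 : F) + (if s = 1 then 1 else 0) =
      #{a : F | χ a = s} := by
  have hone : ({a | χ a = s ∧ 1 - a = 0} : Finset F) = if s = 1 then {1} else ∅ := by
    ext a
    simp only [mem_filter_univ, sub_eq_zero, eq_comm (a := (1 : F))]
    split_ifs with hs
    · rw [mem_singleton]
      exact ⟨And.right, fun ha => ⟨by rw [ha, map_one, hs], ha⟩⟩
    · simp only [notMem_empty, iff_false, not_and]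
      rintro h rfl
      exact hs (by rw [← h, map_one])
  have h := card_filter_quadraticChar ({a | χ a = s} : Finset F) (fun a => 1 - a)
  rw [filter_filter, filter_filter, filter_filter, hone] at h
  rw [← h, cyclotomicNumber, cyclotomicNumber]
  split_ifs <;> simp only [card_singleton, card_empty] <;> omega

lemma cyclotomicNumber_one_neg_one_one :
    cyclotomicNumber 1 (-1) (1 : F) = cyclotomicNumber (-1) 1 (1 : F) :=
  card_equiv (Equiv.subLeft 1) fun a => by
    simp only [mem_filter_univ, Equiv.subLeft_apply, sub_sub_cancel, and_comm]

variable {A : Type*} [CommRing A] (ψ : AddChar F A)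

def gaussPeriod (s : ℤ) : A := ∑ a with χ a = s, ψ a

lemma sum_addChar_eq_one_add_gaussPeriod :
    ∑ a, ψ a = 1 + gaussPeriod ψ 1 + gaussPeriod ψ (-1) := by
  rw [sum_eq_add_sum_quadraticChar, AddChar.map_zero_eq_one, gaussPeriod, gaussPeriod]

lemma gaussPeriod_mulShift {t : F} (ht : t ≠ 0) (s : ℤ) :
    gaussPeriod (ψ.mulShift t) s = gaussPeriod ψ (χ t * s) := by
  have htt : χ t * χ t = 1 := by rw [← sq]; exact quadraticChar_sq_one ht
  refine sum_equiv (Equiv.mulLeft₀ t ht) (fun a => ?_) (fun _ _ => rfl)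
  rw [mem_filter_univ, mem_filter_univ, Equiv.mulLeft₀_apply, quadraticChar_mul_eq_iff ht,
    ← mul_assoc, htt, one_mul]

lemma gaussPeriod_mul_gaussPeriod_eq_sum (s t : ℤ) :
    gaussPeriod ψ s * gaussPeriod ψ t = ∑ k, cyclotomicNumber s t k • ψ k := by
  have hshift (a : F) : ∑ b with χ b = t, ψ (a + b) = ∑ k with χ (k - a) = t, ψ k :=
    sum_equiv (Equiv.addLeft a) (fun b => by simp) (fun _ _ => rfl)
  simp_rw [gaussPeriod, sum_mul_sum, ← ψ.map_add_eq_mul, hshift, cyclotomicNumber,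
    ← sum_const, sum_filter, ite_and, ite_sum_zero]
  exact sum_comm

theorem gaussPeriod_mul_gaussPeriod (s t : ℤ) :
    gaussPeriod ψ s * gaussPeriod ψ t = cyclotomicNumber s t (0 : F) • 1 +
      cyclotomicNumber s t (1 : F) • gaussPeriod ψ 1 +
      cyclotomicNumber (-s) (-t) (1 : F) • gaussPeriod ψ (-1) := by
  have hclass (c : ℤ) (hc : c ≠ 0) :
      ∑ k with χ k = c, cyclotomicNumber s t k • ψ k =
        cyclotomicNumber (c * s) (c * t) (1 : F) • gaussPeriod ψ c := by
    rw [gaussPeriod, smul_sum]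
    refine sum_congr rfl fun k hk => ?_
    rw [mem_filter_univ] at hk
    rw [cyclotomicNumber_of_ne_zero s t (quadraticChar_ne_zero_iff.mp (hk ▸ hc)), hk]
  rw [gaussPeriod_mul_gaussPeriod_eq_sum, sum_eq_add_sum_quadraticChar, ψ.map_zero_eq_one,
    hclass 1 one_ne_zero, hclass (-1) (by decide), one_mul, one_mul, neg_one_mul, neg_one_mul]

variable {m : ℕ}

lemma quadraticChar_neg_of_card_eq (hq : Fintype.card F = 4 * m + 3) (a : F) :
    χ (-a) = -χ a := by
  have h : χ (-1) = -1 :=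
    quadraticChar_neg_one_iff_not_isSquare.mpr (by rw [FiniteField.isSquare_neg_one_iff]; omega)
  rw [neg_eq_neg_one_mul, map_mul, h, neg_one_mul]

lemma card_quadraticChar_eq_neg_one_eq_card_eq_one (hq : Fintype.card F = 4 * m + 3) :
    #{a : F | χ a = -1} = #{a : F | χ a = 1} :=
  card_equiv (Equiv.neg F) fun a => by
    simp only [mem_filter_univ, Equiv.neg_apply, quadraticChar_neg_of_card_eq hq,
      neg_eq_iff_eq_neg]

lemma card_quadraticChar_eq_one (hq : Fintype.card F = 4 * m + 3) :
    #{a : F | χ a = 1} = 2 * m + 1 := by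
  have h := card_filter_quadraticChar univ (id : F → F)
  simp only [id, filter_eq', mem_univ, if_true, card_singleton, card_univ, hq,
    card_quadraticChar_eq_neg_one_eq_card_eq_one hq] at h
  omega

lemma card_quadraticChar_eq_neg_one (hq : Fintype.card F = 4 * m + 3) :
    #{a : F | χ a = -1} = 2 * m + 1 := by
  rw [card_quadraticChar_eq_neg_one_eq_card_eq_one hq, card_quadraticChar_eq_one hq]

lemma cyclotomicNumber_self_zero (hq : Fintype.card F = 4 * m + 3) {s : ℤ} (hs : s ≠ 0) :
    cyclotomicNumber s s (0 : F) = 0 := by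
  refine card_eq_zero.mpr (filter_eq_empty_iff.mpr fun a _ ⟨h, h'⟩ => hs ?_)
  rw [zero_sub, quadraticChar_neg_of_card_eq hq, h] at h'
  omega

lemma cyclotomicNumber_one_neg_one_zero (hq : Fintype.card F = 4 * m + 3) :
    cyclotomicNumber 1 (-1) (0 : F) = 2 * m + 1 := by
  rw [cyclotomicNumber, ← card_quadraticChar_eq_one hq]
  congr 1
  refine filter_congr fun a _ => ?_
  rw [zero_sub, quadraticChar_neg_of_card_eq hq]
  omega

lemma cyclotomicNumber_one_one_one (hq : Fintype.card F = 4 * m + 3) :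
    cyclotomicNumber 1 1 (1 : F) = cyclotomicNumber 1 (-1) (1 : F) :=
  card_equiv (Equiv.inv F) fun a => by
    simp only [mem_filter_univ, Equiv.inv_apply, quadraticChar_inv_apply]
    refine and_congr_right fun ha => ?_
    have ha0 : a ≠ 0 := quadraticChar_ne_zero_iff.mp (by rw [ha]; decide)
    have hinv : 1 - a⁻¹ = -((1 - a) * a⁻¹) := by field_simp; ring
    rw [hinv, quadraticChar_neg_of_card_eq hq, map_mul, quadraticChar_inv_apply, ha]
    omega

lemma cyclotomicNumbers_one (hq : Fintype.card F = 4 * m + 3) :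
    cyclotomicNumber 1 1 (1 : F) = m ∧ cyclotomicNumber 1 (-1) (1 : F) = m ∧
      cyclotomicNumber (-1) 1 (1 : F) = m ∧ cyclotomicNumber (-1) (-1) (1 : F) = m + 1 := by
  have h₁ := cyclotomicNumber_add_cyclotomicNumber_one (F := F) 1
  have h₂ := cyclotomicNumber_add_cyclotomicNumber_one (F := F) (-1)
  rw [card_quadraticChar_eq_one hq, if_pos rfl] at h₁
  rw [card_quadraticChar_eq_neg_one hq, if_neg (by decide)] at h₂
  have h₃ := cyclotomicNumber_one_neg_one_one (F := F)
  have h₄ := cyclotomicNumber_one_one_one hq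
  omega

structure IsGaussPeriodTable (Q N : A) (m : ℕ) : Prop where
  mul_self_left : Q * Q = m • Q + (m + 1) • N
  mul_self_right : N * N = (m + 1) • Q + m • N
  mul : Q * N = (2 * m + 1) • 1 + m • Q + m • N

theorem isGaussPeriodTable_gaussPeriod (hq : Fintype.card F = 4 * m + 3) :
    IsGaussPeriodTable (gaussPeriod ψ 1) (gaussPeriod ψ (-1)) m := by
  obtain ⟨h₁₁, h₁₂, h₂₁, h₂₂⟩ := cyclotomicNumbers_one hq
  refine ⟨?_, ?_, ?_⟩ <;> rw [gaussPeriod_mul_gaussPeriod]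
  · rw [cyclotomicNumber_self_zero hq one_ne_zero, h₁₁, h₂₂, zero_smul, zero_add]
  · rw [cyclotomicNumber_self_zero hq (by decide), neg_neg, h₁₁, h₂₂, zero_smul, zero_add]
  · rw [cyclotomicNumber_one_neg_one_zero hq, neg_neg, h₁₂, h₂₁]

end GaussPeriod

lemma AddChar.mul_sum_eq_sum {G A : Type*} [AddGroup G] [Fintype G] [CommSemiring A]
    (ψ : AddChar G A) (b : G) : ψ b * ∑ a, ψ a = ∑ a, ψ a := by
  simp_rw [Finset.mul_sum, ← ψ.map_add_eq_mul]
  exact Fintype.sum_equiv (Equiv.addLeft b) _ _ fun _ => rfl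

lemma AdjoinRoot.natCard_of_monic {R : Type*} [CommRing R] {g : R[X]} (hg : g.Monic) :
    Nat.card (AdjoinRoot g) = Nat.card R ^ g.natDegree := by
  rw [Nat.card_congr (AdjoinRoot.powerBasis' hg).basis.equivFun.toEquiv, Nat.card_fun,
    Nat.card_fin, AdjoinRoot.powerBasis'_dim]

section IdempotentIdeal

variable {A : Type*} [CommRing A]

lemma IsIdempotentElem.mem_span_singleton_iff {e x : A} (he : IsIdempotentElem e) :
    x ∈ Ideal.span {e} ↔ e * x = x := by
  refine ⟨fun hx => ?_, fun hx => Ideal.mem_span_singleton'.mpr ⟨x, by rw [mul_comm, hx]⟩⟩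
  obtain ⟨c, rfl⟩ := Ideal.mem_span_singleton.mp hx
  rw [← mul_assoc, he.eq]

lemma natCard_span_add_of_mul_eq_zero {e₁ e₂ : A} (he₁ : IsIdempotentElem e₁)
    (he₂ : IsIdempotentElem e₂) (h : e₁ * e₂ = 0) :
    Nat.card (Ideal.span {e₁ + e₂}) = Nat.card (Ideal.span {e₁}) * Nat.card (Ideal.span {e₂}) := by
  have he : IsIdempotentElem (e₁ + e₂) := he₁.add he₂ (by rw [mul_comm e₂, h, add_zero])
  have hmem {e : A} (x : A) : e * x ∈ Ideal.span {e} :=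
    Ideal.mem_span_singleton'.mpr ⟨x, mul_comm _ _⟩
  rw [← Nat.card_prod]
  refine Nat.card_congr
    { toFun := fun x => (⟨e₁ * x, hmem x⟩, ⟨e₂ * x, hmem x⟩)
      invFun := fun ab => ⟨ab.1 + ab.2, ?_⟩
      left_inv := fun x => ?_
      right_inv := fun ab => ?_ }
  · have ha := he₁.mem_span_singleton_iff.mp ab.1.2
    have hb := he₂.mem_span_singleton_iff.mp ab.2.2
    rw [he.mem_span_singleton_iff]
    linear_combination (1 - e₂) * ha + (1 - e₁) * hb + (ab.1 + ab.2 : A) * h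
  · exact Subtype.ext (by simpa [add_mul] using he.mem_span_singleton_iff.mp x.2)
  · have ha := he₁.mem_span_singleton_iff.mp ab.1.2
    have hb := he₂.mem_span_singleton_iff.mp ab.2.2
    refine Prod.ext (Subtype.ext ?_) (Subtype.ext ?_)
    · linear_combination ha - e₁ * hb + (ab.2 : A) * h
    · linear_combination hb - e₂ * ha + (ab.1 : A) * h

lemma natCard_span_mul_natCard_span_one_sub {e : A} (he : IsIdempotentElem e) :
    Nat.card (Ideal.span {e}) * Nat.card (Ideal.span {1 - e}) = Nat.card A := by
  rw [← natCard_span_add_of_mul_eq_zero he he.one_sub he.mul_one_sub_self, add_sub_cancel,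
    Ideal.span_singleton_one]
  exact Nat.card_congr Submodule.topEquiv.toEquiv

end IdempotentIdeal

section QRDecomposition

variable {A : Type*} [CommRing A]

def IsQRDecomposition (D E E' J : A) : Prop :=
  ∃ c, IsUnit c ∧ IsIdempotentElem E ∧ IsIdempotentElem (c * J) ∧ E * (c * J) = 0 ∧
    D = E + c * J ∧ 1 - D = E'

variable {u Q N : A} {m : ℕ}

-- The witness is `c = (4m + 3)⁻¹ mod 9`, which makes `c J` idempotent since `J² = (4m + 3) J`.
lemma IsGaussPeriodTable.isQRDecomposition_of_mod_nine_eq_eight (h : IsGaussPeriodTable Q N m)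
    (h9 : (9 : A) = 0) (hu : IsIdempotentElem u) (hm : m % 9 = 8) :
    IsQRDecomposition (u * (8 * Q) + (1 - u) * (8 * N)) (u * (1 + N) + (1 - u) * (1 + Q))
      (u * (1 + Q) + (1 - u) * (1 + N)) (1 + Q + N) := by
  obtain ⟨k, rfl⟩ : ∃ k, m = 9 * k + 8 := ⟨m / 9, by omega⟩
  obtain ⟨hQQ, hNN, hQN⟩ := h
  have hu := hu.eq
  refine ⟨8, IsUnit.of_mul_eq_one 8 (by grind), ?_, ?_, ?_, ?_, ?_⟩ <;> grind [IsIdempotentElem]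

lemma IsGaussPeriodTable.isQRDecomposition_of_mod_nine_eq_two (h : IsGaussPeriodTable Q N m)
    (h9 : (9 : A) = 0) (hu : IsIdempotentElem u) (hm : m % 9 = 2) :
    IsQRDecomposition
      (u * (3 + 6 * Q + 8 * N) + (1 - u) * (3 + 6 * N + 8 * Q))
      (u * (7 + Q + 3 * N) + (1 - u) * (7 + N + 3 * Q))
      (u * (7 + N + 3 * Q) + (1 - u) * (7 + Q + 3 * N)) (1 + Q + N) := by
  obtain ⟨k, rfl⟩ : ∃ k, m = 9 * k + 2 := ⟨m / 9, by omega⟩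
  obtain ⟨hQQ, hNN, hQN⟩ := h
  have hu := hu.eq
  refine ⟨5, IsUnit.of_mul_eq_one 2 (by grind), ?_, ?_, ?_, ?_, ?_⟩ <;> grind [IsIdempotentElem]

lemma IsGaussPeriodTable.isQRDecomposition_of_mod_nine_eq_five (h : IsGaussPeriodTable Q N m)
    (h9 : (9 : A) = 0) (hu : IsIdempotentElem u) (hm : m % 9 = 5) :
    IsQRDecomposition
      (u * (6 + 3 * Q + 8 * N) + (1 - u) * (6 + 3 * N + 8 * Q))
      (u * (4 + Q + 6 * N) + (1 - u) * (4 + N + 6 * Q))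
      (u * (4 + N + 6 * Q) + (1 - u) * (4 + Q + 6 * N)) (1 + Q + N) := by
  obtain ⟨k, rfl⟩ : ∃ k, m = 9 * k + 5 := ⟨m / 9, by omega⟩
  obtain ⟨hQQ, hNN, hQN⟩ := h
  have hu := hu.eq
  refine ⟨2, IsUnit.of_mul_eq_one 5 (by grind), ?_, ?_, ?_, ?_, ?_⟩ <;> grind [IsIdempotentElem]

end QRDecomposition

lemma R9.natCard : Nat.card R9 = 81 := by
  have : Fact (1 < 9) := ⟨by norm_num⟩
  have hmonic : ((X : (ZMod 9)[X]) ^ 2 - X).Monic := monic_X_pow_sub (by rw [degree_X]; decide)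
  have hdeg : ((X : (ZMod 9)[X]) ^ 2 - X).natDegree = 2 := by compute_degree!
  exact (AdjoinRoot.natCard_of_monic hmonic).trans (by rw [hdeg, Nat.card_zmod]; norm_num)

instance : Nontrivial R9 :=
  have : Finite R9 := Nat.finite_of_card_ne_zero (by rw [R9.natCard]; decide)
  Finite.one_lt_card_iff_nontrivial.mp (by rw [R9.natCard]; decide)

lemma Rn.natCard {n : ℕ} (hn : n ≠ 0) : Nat.card (Rn n) = 81 ^ n := by
  have hmonic : ((X : R9[X]) ^ n - 1).Monic := by simpa using monic_X_pow_sub_C (1 : R9) hn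
  have hdeg : ((X : R9[X]) ^ n - 1).natDegree = n := by
    simpa using natDegree_X_pow_sub_C (n := n) (r := (1 : R9))
  exact (AdjoinRoot.natCard_of_monic hmonic).trans (by rw [hdeg, R9.natCard])

lemma R9.nine_eq_zero : (9 : R9) = 0 := by
  rw [← map_ofNat ι 9]
  exact map_zero ι

lemma Rn.nine_eq_zero (n : ℕ) : (9 : Rn n) = 0 := by
  rw [← map_ofNat (ofR n) 9, R9.nine_eq_zero, map_zero]

lemma R9.isUnit_natCast {n : ℕ} (hn : n % 3 ≠ 0) : IsUnit (n : R9) := by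
  have hcop : n.Coprime (3 ^ 2) :=
    Nat.Coprime.pow_right 2 ((Nat.Prime.coprime_iff_not_dvd Nat.prime_three).mpr (by omega)).symm
  rw [← map_natCast ι n]
  exact ((ZMod.isUnit_iff_coprime n 9).mpr hcop).map ι

lemma isIdempotentElem_uP (n : ℕ) : IsIdempotentElem (uP n) := by
  have huu : IsIdempotentElem uu := by
    rw [IsIdempotentElem, uu, ← map_mul, Ideal.Quotient.mk_eq_mk_iff_sub_mem, ← sq]
    exact Ideal.subset_span rfl
  exact huu.map (ofR n)

lemma xbar_pow_self (n : ℕ) : xbar n ^ n = 1 := by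
  rw [xbar, ← map_pow, ← map_one (Ideal.Quotient.mk _), Ideal.Quotient.mk_eq_mk_iff_sub_mem]
  exact Ideal.subset_span rfl

def evalOne (n : ℕ) : Rn n →+* R9 := AdjoinRoot.lift (RingHom.id R9) 1 (by simp)

lemma evalOne_ofR (n : ℕ) (a : R9) : evalOne n (ofR n a) = a := AdjoinRoot.lift_of _

lemma evalOne_xbar (n : ℕ) : evalOne n (xbar n) = 1 := AdjoinRoot.lift_root _

section QuadraticResidueCode

variable (p : ℕ) [Fact p.Prime]

local notation "χ" => quadraticChar (ZMod p)

def xbarChar : AddChar (ZMod p) (Rn p) where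
  toFun a := xbar p ^ a.val
  map_zero_eq_one' := by rw [ZMod.val_zero, pow_zero]
  map_add_eq_mul' a b := by rw [ZMod.val_add, ← pow_eq_pow_mod _ (xbar_pow_self p), pow_add]

lemma xbarChar_one : xbarChar p 1 = xbar p := by
  rw [xbarChar, AddChar.coe_mk, ZMod.val_one, pow_one]

lemma Qpoly_eq_gaussPeriod : Qpoly p = gaussPeriod (xbarChar p) 1 := by
  rw [Qpoly, gaussPeriod, sum_filter]
  refine sum_congr rfl fun a _ => ?_
  simp only [quadraticChar_eq_one_iff]
  rfl

lemma Npoly_eq_gaussPeriod : Npoly p = gaussPeriod (xbarChar p) (-1) := by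
  rw [Npoly, gaussPeriod, sum_filter]
  refine sum_congr rfl fun a _ => ?_
  have hiff : a ≠ 0 ∧ ¬IsSquare a ↔ χ a = -1 := by
    rw [quadraticChar_neg_one_iff_not_isSquare]
    exact and_iff_right_of_imp fun h ha => h (ha ▸ IsSquare.zero)
  simp only [hiff]
  rfl

-- The definitions give `Rn p` two ring structures that agree only up to unfolding; naming
-- `A := Rn p` makes the general lemmas use the `CommRing` one.
lemma isGaussPeriodTable_Qpoly_Npoly (hp : p % 12 = 11) :
    IsGaussPeriodTable (Qpoly p) (Npoly p) (p / 4) := by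
  rw [Qpoly_eq_gaussPeriod, Npoly_eq_gaussPeriod]
  exact isGaussPeriodTable_gaussPeriod (A := Rn p) (m := p / 4) (xbarChar p)
    (by rw [ZMod.card]; omega)

def allOnes : Rn p := ∑ a, xbarChar p a

lemma allOnes_eq_one_add_Qpoly_add_Npoly : allOnes p = 1 + Qpoly p + Npoly p := by
  rw [Qpoly_eq_gaussPeriod, Npoly_eq_gaussPeriod]
  exact sum_addChar_eq_one_add_gaussPeriod (A := Rn p) _

lemma evalOne_allOnes : evalOne p (allOnes p) = p := by
  simp [allOnes, xbarChar, evalOne_xbar]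

lemma xbar_mul_allOnes : xbar p * allOnes p = allOnes p := by
  rw [← xbarChar_one]
  exact AddChar.mul_sum_eq_sum (G := ZMod p) (A := Rn p) (xbarChar p) 1

lemma mul_allOnes (f : Rn p) : f * allOnes p = ofR p (evalOne p f) * allOnes p := by
  obtain ⟨g, rfl⟩ := Ideal.Quotient.mk_surjective f
  induction g using Polynomial.induction_on with
  | C a =>
    change ofR p a * _ = ofR p (evalOne p (ofR p a)) * _
    rw [evalOne_ofR]
  | add f g hf hg => rw [map_add, add_mul, hf, hg, map_add, map_add, add_mul]
  | monomial n a h =>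
    rw [pow_succ (X : R9[X]), ← mul_assoc, map_mul (Ideal.Quotient.mk _) (C a * X ^ n), mul_assoc]
    change _ * (xbar p * _) = ofR p (evalOne p (_ * xbar p)) * _
    rw [xbar_mul_allOnes, h, map_mul (evalOne p), evalOne_xbar, mul_one]

lemma natCard_span_allOnes (hp : IsUnit (p : R9)) :
    Nat.card (Ideal.span {allOnes p}) = Nat.card R9 := by
  have hmem (s : R9) : ofR p s * allOnes p ∈ Ideal.span {allOnes p} :=
    Ideal.mem_span_singleton'.mpr ⟨_, rfl⟩
  refine (Nat.card_congr (Equiv.ofBijective (fun s => ⟨_, hmem s⟩) ⟨fun s s' h => ?_, ?_⟩)).symm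
  · have h' := congrArg (evalOne p) (congrArg Subtype.val h)
    simp only [map_mul, evalOne_ofR, evalOne_allOnes] at h'
    exact hp.mul_left_inj.mp h'
  · rintro ⟨y, hy⟩
    obtain ⟨f, rfl⟩ := Ideal.mem_span_singleton'.mp hy
    exact ⟨evalOne p f, Subtype.ext (mul_allOnes p f).symm⟩

lemma isQRDecomposition_D1gen (hp : p % 12 = 11) :
    IsQRDecomposition (D1gen p) (E1gen p) (E2gen p) (allOnes p) := by
  have h := isGaussPeriodTable_Qpoly_Npoly p hp
  have h9 := Rn.nine_eq_zero p
  have hu := isIdempotentElem_uP p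
  rw [allOnes_eq_one_add_Qpoly_add_Npoly]
  rcases (by omega : p % 36 = 35 ∨ p % 36 = 11 ∨ p % 36 = 23) with hp' | hp' | hp'
  · simp only [D1gen, E1gen, E2gen, if_pos (show (p + 1) / 12 % 3 = 0 by omega)]
    exact h.isQRDecomposition_of_mod_nine_eq_eight h9 hu (by omega)
  · simp only [D1gen, E1gen, E2gen, if_neg (show ¬(p + 1) / 12 % 3 = 0 by omega),
      if_pos (show (p + 1) / 12 % 3 = 1 by omega)]
    exact h.isQRDecomposition_of_mod_nine_eq_two h9 hu (by omega)
  · simp only [D1gen, E1gen, E2gen, if_neg (show ¬(p + 1) / 12 % 3 = 0 by omega),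
      if_neg (show ¬(p + 1) / 12 % 3 = 1 by omega)]
    exact h.isQRDecomposition_of_mod_nine_eq_five h9 hu (by omega)

lemma natCard_span_of_isQRDecomposition {D E E' : Rn p}
    (h : IsQRDecomposition D E E' (allOnes p)) (hp : IsUnit (p : R9)) :
    Nat.card (Ideal.span {D}) = Nat.card (Ideal.span {E}) * 81 ∧
      Nat.card (Ideal.span {D}) * Nat.card (Ideal.span {E'}) = 81 ^ p := by
  obtain ⟨c, hc, hE, hcJ, horth, rfl, rfl⟩ := h
  have hD : IsIdempotentElem (E + c * allOnes p) :=
    hE.add hcJ (by rw [mul_comm _ E, horth, add_zero])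
  refine ⟨?_, ?_⟩
  · rw [natCard_span_add_of_mul_eq_zero hE hcJ horth, Ideal.span_singleton_mul_left_unit hc,
      natCard_span_allOnes p hp, R9.natCard]
  · exact (natCard_span_mul_natCard_span_one_sub (A := Rn p) hD).trans
      (Rn.natCard (Fact.out : p.Prime).ne_zero)

def dilate (t : ZMod p) : Rn p →+* Rn p :=
  AdjoinRoot.lift (ofR p) (xbarChar p t) (by
    rw [eval₂_sub, eval₂_X_pow, eval₂_one, ← AddChar.map_nsmul_eq_pow, nsmul_eq_mul,
      ZMod.natCast_self, zero_mul, AddChar.map_zero_eq_one, sub_self])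

lemma dilate_ofR (t : ZMod p) (a : R9) : dilate p t (ofR p a) = ofR p a := AdjoinRoot.lift_of _

lemma dilate_xbar (t : ZMod p) : dilate p t (xbar p) = xbarChar p t := AdjoinRoot.lift_root _

lemma dilate_xbarChar (t a : ZMod p) : dilate p t (xbarChar p a) = xbarChar p (t * a) := by
  change dilate p t (xbar p ^ a.val) = _
  rw [map_pow, dilate_xbar, ← AddChar.map_nsmul_eq_pow, nsmul_eq_mul, ZMod.natCast_zmod_val,
    mul_comm]

lemma dilate_comp_dilate (t s : ZMod p) : (dilate p t).comp (dilate p s) = dilate p (t * s) := by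
  refine AdjoinRoot.ringHom_ext (RingHom.ext fun a => ?_) ?_
  · exact (congrArg (dilate p t) (dilate_ofR p s a)).trans
      ((dilate_ofR p t a).trans (dilate_ofR p (t * s) a).symm)
  · exact (congrArg (dilate p t) (dilate_xbar p s)).trans
      ((dilate_xbarChar p t s).trans (dilate_xbar p (t * s)).symm)

lemma dilate_one : dilate p 1 = RingHom.id (Rn p) :=
  AdjoinRoot.ringHom_ext (RingHom.ext fun a => dilate_ofR p 1 a)
    ((dilate_xbar p 1).trans (xbarChar_one p))

def dilateEquiv {t : ZMod p} (ht : t ≠ 0) : Rn p ≃+* Rn p :=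
  .ofRingHom (dilate p t) (dilate p t⁻¹)
    (by rw [dilate_comp_dilate, mul_inv_cancel₀ ht, dilate_one])
    (by rw [dilate_comp_dilate, inv_mul_cancel₀ ht, dilate_one])

lemma natCard_span_dilate {t : ZMod p} (ht : t ≠ 0) (x : Rn p) :
    Nat.card (Ideal.span {dilate p t x}) = Nat.card (Ideal.span {x}) := by
  refine (Nat.card_congr ((dilateEquiv p ht).toEquiv.subtypeEquiv fun y => ?_)).symm
  rw [Ideal.mem_span_singleton (α := Rn p), Ideal.mem_span_singleton (α := Rn p)]
  exact (map_dvd_iff (dilateEquiv p ht)).symm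

lemma dilate_gaussPeriod {t : ZMod p} (ht : t ≠ 0) (s : ℤ) :
    dilate p t (gaussPeriod (xbarChar p) s) = gaussPeriod (xbarChar p) (χ t * s) := by
  rw [← gaussPeriod_mulShift _ ht, gaussPeriod, gaussPeriod, map_sum]
  simp only [dilate_xbarChar]
  rfl

lemma dilate_Qpoly {t : ZMod p} (ht : χ t = -1) : dilate p t (Qpoly p) = Npoly p := by
  rw [Qpoly_eq_gaussPeriod, Npoly_eq_gaussPeriod,
    dilate_gaussPeriod p (quadraticChar_ne_zero_iff.mp (by rw [ht]; decide)), ht, mul_one]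

lemma dilate_Npoly {t : ZMod p} (ht : χ t = -1) : dilate p t (Npoly p) = Qpoly p := by
  rw [Qpoly_eq_gaussPeriod, Npoly_eq_gaussPeriod,
    dilate_gaussPeriod p (quadraticChar_ne_zero_iff.mp (by rw [ht]; decide)), ht, mul_neg_one,
    neg_neg]

lemma dilate_uP (t : ZMod p) : dilate p t (uP p) = uP p := dilate_ofR p t uu

lemma dilate_E1gen {t : ZMod p} (ht : χ t = -1) : dilate p t (E1gen p) = E2gen p := by
  simp only [E1gen, E2gen]
  split_ifs <;> simp only [map_add, map_mul, map_sub, map_one, map_ofNat (dilate p t),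
    dilate_Qpoly p ht, dilate_Npoly p ht, dilate_uP]

lemma dilate_D1gen {t : ZMod p} (ht : χ t = -1) : dilate p t (D1gen p) = D2gen p := by
  simp only [D1gen, D2gen]
  split_ifs <;> simp only [map_add, map_mul, map_sub, map_one, map_ofNat (dilate p t),
    dilate_Qpoly p ht, dilate_Npoly p ht, dilate_uP]

end QuadraticResidueCode

lemma eq_nine_pow_of_mul_mul_self {n x : ℕ} (hn : n ≠ 0) (h : x * 81 * x = 81 ^ n) :
    x = 9 ^ (n - 1) := by
  obtain ⟨k, rfl⟩ := Nat.exists_eq_add_one_of_ne_zero hn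
  have h81 : 81 ^ (k + 1) = 81 * (9 ^ k) ^ 2 := by rw [← pow_mul, mul_comm k 2, pow_mul]; ring
  refine Nat.pow_left_injective two_ne_zero (Nat.eq_of_mul_eq_mul_left (by norm_num : 0 < 81) ?_)
  rw [add_tsub_cancel_right, ← h81, ← h]
  ring

theorem stmt17 (p : ℕ) [Fact p.Prime] (hp12 : p % 12 = 11) :
    Nat.card ↥(Ideal.span {D1gen p}) = 9 ^ (p + 1) ∧
    Nat.card ↥(Ideal.span {D2gen p}) = 9 ^ (p + 1) ∧
    Nat.card ↥(Ideal.span {E1gen p}) = 9 ^ (p - 1) ∧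
    Nat.card ↥(Ideal.span {E2gen p}) = 9 ^ (p - 1) := by
  obtain ⟨hDE₁, hDE₂⟩ := natCard_span_of_isQRDecomposition p (isQRDecomposition_D1gen p hp12)
    (R9.isUnit_natCast (by omega))
  have hχ : quadraticChar (ZMod p) (-1) = -1 := by
    rw [quadraticChar_neg_of_card_eq (m := p / 4) (by rw [ZMod.card]; omega), map_one]
  have hswap := natCard_span_dilate p (neg_ne_zero.mpr one_ne_zero : (-1 : ZMod p) ≠ 0)
  have hE : Nat.card (Ideal.span {E2gen p}) = Nat.card (Ideal.span {E1gen p}) := by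
    rw [← dilate_E1gen p hχ, hswap]
  have hD : Nat.card (Ideal.span {D2gen p}) = Nat.card (Ideal.span {D1gen p}) := by
    rw [← dilate_D1gen p hχ, hswap]
  have hE₁ : Nat.card (Ideal.span {E1gen p}) = 9 ^ (p - 1) :=
    eq_nine_pow_of_mul_mul_self (Fact.out : p.Prime).ne_zero (by rw [← hDE₁, ← hE, hDE₂])
  have hD₁ : Nat.card (Ideal.span {D1gen p}) = 9 ^ (p + 1) := by
    rw [hDE₁, hE₁, show (81 : ℕ) = 9 ^ 2 by norm_num, ← pow_add]
    congr 1
    omega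
  exact ⟨hD₁, hD.trans hD₁, hE₁, hE.trans hE₁⟩
end
end
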